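/- arXiv:2101.00227 — 3 statements merged into one kernel-verified Lean document; each statement's English description precedes it below -/
import Mathlib

section
/- For every integer x \ge 0, x^9 = \sum_{k=1}^{x} (630 k^4 (x-k)^4 - 120 k (x-k) + 1). -/
/-!
The summand is a polynomial in `k` with coefficients in `ℤ[x]`, so its partial sums are
given by a discrete antiderivative `F x y` (from Faulhaber's formulas), which happens to
have integer coefficients. Telescoping gives `∑_{k=1}^{x} (…) = F x x - F x 0`. Written in
`y` and `z = x - y`, `F` reduces to `y ^ 9` at `z = 0`, so `F x x = x ^ 9`.
-/

open Finset

theorem Int.sum_Icc_one_eq_sub_of_forall_sub_eq {M : Type*} [AddCommGroup M] {f F : ℤ → M}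
    (hF : ∀ y, F (y + 1) - F y = f (y + 1)) {n : ℤ} (hn : 0 ≤ n) :
    ∑ k ∈ Icc 1 n, f k = F n - F 0 := by
  induction n, hn using Int.leInduction with
  | base => simp
  | succ m hm ih =>
    rw [← insert_Icc_right_eq_Icc_add_one (by omega), sum_insert (by simp), ih, ← hF m]
    abel

def ninthPowerAntideriv (x y : ℤ) : ℤ :=
  let z := x - y
  y ^ 9 + 9 * z * y ^ 8 + 36 * z ^ 2 * y ^ 7 + 84 * z ^ 3 * y ^ 6 + 126 * z ^ 4 * y ^ 5
    + 315 * z ^ 4 * y ^ 4 + 210 * z ^ 4 * y ^ 3 - 21 * z ^ 4 * y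
    + 126 * z ^ 3 * y ^ 2 - 210 * z ^ 3 * y ^ 4
    + 90 * z ^ 2 * y - 126 * z ^ 2 * y ^ 3
    - 60 * z * y - 90 * z * y ^ 2 + 21 * z * y ^ 4

theorem ninthPowerAntideriv_add_one_sub (x y : ℤ) :
    ninthPowerAntideriv x (y + 1) - ninthPowerAntideriv x y
      = 630 * (y + 1) ^ 4 * (x - (y + 1)) ^ 4 - 120 * (y + 1) * (x - (y + 1)) + 1 := by
  unfold ninthPowerAntideriv
  ring

theorem ninthPowerAntideriv_zero (x : ℤ) : ninthPowerAntideriv x 0 = 0 := by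
  simp [ninthPowerAntideriv]

theorem ninthPowerAntideriv_self (x : ℤ) : ninthPowerAntideriv x x = x ^ 9 := by
  simp [ninthPowerAntideriv]

theorem stmt_3 (x : ℤ) (hx : 0 ≤ x) :
    x^9 = ∑ k ∈ Finset.Icc (1:ℤ) x, (630*k^4*(x-k)^4 - 120*k*(x-k) + 1) := by
  rw [Int.sum_Icc_one_eq_sub_of_forall_sub_eq (ninthPowerAntideriv_add_one_sub x) hx,
    ninthPowerAntideriv_self, ninthPowerAntideriv_zero, sub_zero]
end

section
/- For every integer x \ge 0, x^{11} = \sum_{k=1}^{x} (2772 k^5 (x-k)^5 + 660 k^2 (x-k)^2 - 1386 k (x-k) + 1). -/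
/-!
Expanding the summand in powers of `k` turns the right-hand side into a combination, with
coefficients polynomial in `x`, of the power sums `∑ k ∈ Icc 1 x, k ^ p` for `p ≤ 10`.
Substituting Faulhaber's closed forms for these, each checked by telescoping, leaves a
polynomial identity in `x`.
-/

open Finset

lemma sum_Icc_one_eq_sub_of_forall_add_one_sub {M : Type*} [AddCommGroup M] {f F : ℤ → M}
    (hF : ∀ n, F (n + 1) - F n = f (n + 1)) {x : ℤ} (hx : 0 ≤ x) :
    ∑ k ∈ Icc 1 x, f k = F x - F 0 := by
  induction x, hx using Int.leInduction with
  | base => simp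
  | succ n hn ih =>
    rw [← insert_Icc_right_eq_Icc_add_one (by omega), sum_insert (by simp), ih, ← hF n]
    abel

lemma mul_sum_Icc_one_eq {R : Type*} [Ring R] {x : ℤ} (hx : 0 ≤ x) {c : R} {f F : ℤ → R}
    (hF0 : F 0 = 0) (hF : ∀ n, F (n + 1) - F n = c * f (n + 1)) :
    c * ∑ k ∈ Icc 1 x, f k = F x := by
  rw [mul_sum, sum_Icc_one_eq_sub_of_forall_add_one_sub hF hx, hF0, sub_zero]

lemma sum_Icc_one_one {x : ℤ} (hx : 0 ≤ x) : ∑ _k ∈ Icc 1 x, (1 : ℤ) = x := by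
  simp [hx]

lemma sum_Icc_one_id {x : ℤ} (hx : 0 ≤ x) :
    2 * ∑ k ∈ Icc 1 x, k = x ^ 2 + x := by
  apply mul_sum_Icc_one_eq hx <;> intros <;> ring

lemma sum_Icc_one_pow_two {x : ℤ} (hx : 0 ≤ x) :
    6 * ∑ k ∈ Icc 1 x, k ^ 2 = 2 * x ^ 3 + 3 * x ^ 2 + x := by
  apply mul_sum_Icc_one_eq hx <;> intros <;> ring

lemma sum_Icc_one_pow_three {x : ℤ} (hx : 0 ≤ x) :
    4 * ∑ k ∈ Icc 1 x, k ^ 3 = x ^ 4 + 2 * x ^ 3 + x ^ 2 := by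
  apply mul_sum_Icc_one_eq hx <;> intros <;> ring

lemma sum_Icc_one_pow_four {x : ℤ} (hx : 0 ≤ x) :
    30 * ∑ k ∈ Icc 1 x, k ^ 4 =
      6 * x ^ 5 + 15 * x ^ 4 + 10 * x ^ 3 - x := by
  apply mul_sum_Icc_one_eq hx <;> intros <;> ring

lemma sum_Icc_one_pow_five {x : ℤ} (hx : 0 ≤ x) :
    12 * ∑ k ∈ Icc 1 x, k ^ 5 =
      2 * x ^ 6 + 6 * x ^ 5 + 5 * x ^ 4 - x ^ 2 := by
  apply mul_sum_Icc_one_eq hx <;> intros <;> ring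

lemma sum_Icc_one_pow_six {x : ℤ} (hx : 0 ≤ x) :
    42 * ∑ k ∈ Icc 1 x, k ^ 6 =
      6 * x ^ 7 + 21 * x ^ 6 + 21 * x ^ 5 - 7 * x ^ 3 + x := by
  apply mul_sum_Icc_one_eq hx <;> intros <;> ring

lemma sum_Icc_one_pow_seven {x : ℤ} (hx : 0 ≤ x) :
    24 * ∑ k ∈ Icc 1 x, k ^ 7 =
      3 * x ^ 8 + 12 * x ^ 7 + 14 * x ^ 6 - 7 * x ^ 4 + 2 * x ^ 2 := by
  apply mul_sum_Icc_one_eq hx <;> intros <;> ring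

lemma sum_Icc_one_pow_eight {x : ℤ} (hx : 0 ≤ x) :
    90 * ∑ k ∈ Icc 1 x, k ^ 8 =
      10 * x ^ 9 + 45 * x ^ 8 + 60 * x ^ 7 - 42 * x ^ 5 + 20 * x ^ 3 - 3 * x := by
  apply mul_sum_Icc_one_eq hx <;> intros <;> ring

lemma sum_Icc_one_pow_nine {x : ℤ} (hx : 0 ≤ x) :
    20 * ∑ k ∈ Icc 1 x, k ^ 9 =
      2 * x ^ 10 + 10 * x ^ 9 + 15 * x ^ 8 - 14 * x ^ 6 + 10 * x ^ 4 - 3 * x ^ 2 := by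
  apply mul_sum_Icc_one_eq hx <;> intros <;> ring

lemma sum_Icc_one_pow_ten {x : ℤ} (hx : 0 ≤ x) :
    66 * ∑ k ∈ Icc 1 x, k ^ 10 =
      6 * x ^ 11 + 33 * x ^ 10 + 55 * x ^ 9 - 66 * x ^ 7 + 66 * x ^ 5 - 33 * x ^ 3 + 5 * x := by
  apply mul_sum_Icc_one_eq hx <;> intros <;> ring

theorem stmt_4 (x : ℤ) (hx : 0 ≤ x) :
    x^11 = ∑ k ∈ Finset.Icc (1:ℤ) x,
      (2772*k^5*(x-k)^5 + 660*k^2*(x-k)^2 - 1386*k*(x-k) + 1) := by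
  have expand : ∀ k : ℤ, 2772*k^5*(x-k)^5 + 660*k^2*(x-k)^2 - 1386*k*(x-k) + 1 =
      2772*x^5*k^5 - 13860*x^4*k^6 + 27720*x^3*k^7 - 27720*x^2*k^8 + 13860*x*k^9 - 2772*k^10
        + 660*k^4 - 1320*x*k^3 + (660*x^2 + 1386)*k^2 - 1386*x*k + 1 := fun k => by ring
  simp only [expand, sum_add_distrib, sum_sub_distrib, ← mul_sum]
  -- the `simp` set above does not pull `1386 * x` out of `∑ k, 1386 * x * k`
  rw [← mul_sum]
  linear_combination -(231*x^5*sum_Icc_one_pow_five hx - 330*x^4*sum_Icc_one_pow_six hx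
    + 1155*x^3*sum_Icc_one_pow_seven hx - 308*x^2*sum_Icc_one_pow_eight hx
    + 693*x*sum_Icc_one_pow_nine hx - 42*sum_Icc_one_pow_ten hx
    + 22*sum_Icc_one_pow_four hx - 330*x*sum_Icc_one_pow_three hx
    + (110*x^2 + 231)*sum_Icc_one_pow_two hx - 693*x*sum_Icc_one_id hx + sum_Icc_one_one hx)
end

section
/- If real numbers A_0, A_1, A_2 satisfy x^5 = \sum_{k=1}^{x} (A_2 k^2(x-k)^2 + A_1 k(x-k) + A_0) for all natural numbers x \ge 1, then A_2 = 30, A_1 = 0, and A_0 = 1. -/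
theorem stmt_11 (A₀ A₁ A₂ : ℝ)
    (h : ∀ x : ℕ, 1 ≤ x →
      (x:ℝ)^5 = ∑ k ∈ Finset.Icc 1 x,
        (A₂ * (k:ℝ)^2 * ((x:ℝ) - (k:ℝ))^2 + A₁ * (k:ℝ) * ((x:ℝ) - (k:ℝ)) + A₀)) :
    A₂ = 30 ∧ A₁ = 0 ∧ A₀ = 1 := by
  have at_one : 1 = A₀ := by
    simpa using h 1 le_rfl
  have at_two : 32 = A₂ + A₁ + 2 * A₀ := by
    have := h 2 (by norm_num)
    norm_num [Finset.sum_Icc_succ_top] at this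
    linarith
  have at_three : 243 = 8 * A₂ + 4 * A₁ + 3 * A₀ := by
    have := h 3 (by norm_num)
    norm_num [Finset.sum_Icc_succ_top] at this
    linarith
  exact ⟨by linarith, by linarith, at_one.symm⟩
end
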